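/- arXiv:2103.13715 — 3 statements merged into one kernel-verified Lean document; each statement's English description precedes it below -/
import Mathlib

section
/- Define G_{n−1}^{α,β} = (1/(n−1)!) ∑_{j=0}^{n−1} (−1)^j C(n−1,j) p(α+j) F_{n−1}^β(α+j), where F_{n−1}^β(x) = ∏_{m=0}^{n−1} 1/(x−β−m). If p is a polynomial with deg p ≤ 2n−2, then G_{n−1}^{α,β} + G_{n−1}^{β,α} = 0. -/
/-!
Since `α - β ∉ ℤ`, the `2n` nodes `α, α + 1, …, α + n - 1, β, β + 1, …, β + n - 1` are distinct.
For `deg p ≤ 2n - 2` the coefficient of `X ^ (2n - 1)` in the interpolant of `p` on these nodes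
vanishes, i.e. `∑ᵢ p(xᵢ) / ∏_{k ≠ i} (xᵢ - xₖ) = 0`. At the node `α + j` the denominator is
`(-1) ^ (n - 1 - j) j! (n - 1 - j)! ∏ₘ (α + j - β - m)`, so the nodes `α + j` contribute
`(-1) ^ (n - 1) G_{n-1}^{α,β}` and, symmetrically, the nodes `β + j` contribute
`(-1) ^ (n - 1) G_{n-1}^{β,α}`.
-/

/-- `G_{n−1}^{α,β} := (1/(n−1)!) ∑_{j=0}^{n−1} (−1)^j C(n−1,j) p(α+j) F_{n−1}^β(α+j)`,
with `F_{n−1}^β(x) = ∏_{m=0}^{n−1} 1/(x−β−m)`. -/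
noncomputable def G (n : ℕ) (p : Polynomial ℝ) (α β : ℝ) : ℝ :=
  (1 / (Nat.factorial (n - 1) : ℝ)) *
    ∑ j ∈ Finset.range n, (-1 : ℝ) ^ j * (Nat.choose (n - 1) j : ℝ) *
      p.eval (α + (j : ℝ)) *
      ∏ m ∈ Finset.range n, (1 / (α + (j : ℝ) - β - (m : ℝ)))

open Polynomial Finset Nat

theorem Lagrange.sum_div_prod_erase_sub_eq_zero {F ι : Type*} [Field F] [DecidableEq ι]
    {s : Finset ι} {v : ι → F} (hvs : Set.InjOn v s) {P : F[X]} (hP : P.degree < ↑(#s - 1)) :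
    ∑ i ∈ s, P.eval (v i) / ∏ j ∈ s.erase i, (v i - v j) = 0 := by
  rw [← coeff_eq_sum hvs (hP.trans_le (by exact_mod_cast Nat.sub_le _ 1)),
    coeff_eq_zero_of_degree_lt hP]

theorem Finset.disjSum_erase_inl {α β : Type*} [DecidableEq α] [DecidableEq β]
    (s : Finset α) (t : Finset β) (a : α) :
    (s.disjSum t).erase (.inl a) = (s.erase a).disjSum t := by
  ext (x | x) <;> simp

theorem Finset.disjSum_erase_inr {α β : Type*} [DecidableEq α] [DecidableEq β]
    (s : Finset α) (t : Finset β) (b : β) :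
    (s.disjSum t).erase (.inr b) = s.disjSum (t.erase b) := by
  ext (x | x) <;> simp

theorem prod_range_erase_natCast_sub {R : Type*} [CommRing R] {n j : ℕ} (hj : j < n) :
    ∏ m ∈ (range n).erase j, ((j : R) - m) = (-1) ^ (n - 1 - j) * j ! * (n - 1 - j)! := by
  have hsplit : (range n).erase j = range j ∪ Ico (j + 1) n := by
    ext; simp only [mem_erase, mem_range, mem_union, mem_Ico]; omega
  have hdisj : Disjoint (range j) (Ico (j + 1) n) := by
    rw [disjoint_left]; intro m; simp only [mem_range, mem_Ico]; omega
  have hbelow : ∏ m ∈ range j, ((j : R) - m) = j ! := by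
    rw [← descPochhammer_eval_eq_prod_range, descPochhammer_eval_eq_descFactorial,
      descFactorial_self]
  have habove : ∏ m ∈ Ico (j + 1) n, ((j : R) - m) = (-1) ^ (n - 1 - j) * (n - 1 - j)! := by
    rw [prod_Ico_eq_prod_range, show n - (j + 1) = n - 1 - j by omega,
      ← prod_range_add_one_eq_factorial, cast_prod]
    trans ∏ k ∈ range (n - 1 - j), -((k + 1 : ℕ) : R)
    · exact prod_congr rfl fun k _ => by push_cast; ring
    · rw [prod_neg, card_range]
  rw [hsplit, prod_union hdisj, hbelow, habove]; ring

theorem inv_prod_range_erase_natCast_sub {K : Type*} [Field K] [CharZero K] {n j : ℕ}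
    (hj : j < n) :
    (∏ m ∈ (range n).erase j, ((j : K) - m))⁻¹
      = (-1) ^ (n - 1) * ((-1) ^ j * (n - 1).choose j / (n - 1)!) := by
  obtain ⟨k, rfl⟩ := Nat.exists_eq_add_of_lt hj
  rw [prod_range_erase_natCast_sub hj, show j + k + 1 - 1 = j + k by omega,
    show j + k - j = k by omega, cast_choose K (le_add_right j k), add_tsub_cancel_left]
  have hsign : (-1 : K) ^ k * (-1) ^ (j + k) * (-1) ^ j = 1 := by
    rw [← pow_add, ← pow_add]; exact Even.neg_one_pow ⟨j + k, by ring⟩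
  have hfact : ((j + k)! : K) ≠ 0 := cast_ne_zero.2 (factorial_ne_zero _)
  field_simp
  rw [hsign]

theorem neg_one_pow_mul_G (n : ℕ) (p : ℝ[X]) (α β : ℝ) :
    (-1) ^ (n - 1) * G n p α β = ∑ j ∈ range n, p.eval (α + j) /
      ((∏ k ∈ (range n).erase j, (α + j - (α + k))) * ∏ m ∈ range n, (α + j - (β + m))) := by
  rw [G, ← mul_assoc, mul_sum]
  refine sum_congr rfl fun j hj => ?_
  simp only [add_sub_add_left_eq_sub, div_eq_mul_inv, one_mul, mul_inv, Finset.prod_inv_distrib,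
    inv_prod_range_erase_natCast_sub (mem_range.1 hj), sub_sub]
  ring

theorem injective_sumElim_add_natCast {R : Type*} [CommRing R] [CharZero R] {α β : R}
    (hαβ : ∀ m : ℤ, α - β ≠ m) :
    Function.Injective (Sum.elim (fun i : ℕ => α + i) (fun i : ℕ => β + i)) := by
  rintro (i | i) (j | j) h <;>
    simp only [Sum.elim_inl, Sum.elim_inr, add_right_inj, Nat.cast_inj, Sum.inl.injEq,
      Sum.inr.injEq, reduceCtorEq] at h ⊢
  exacts [h, hαβ (j - i) (by push_cast; linear_combination h),
    hαβ (i - j) (by push_cast; linear_combination -h), h]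

theorem G_antisymmetric_general (n : ℕ) (p : Polynomial ℝ)
    (hp : p.degree ≤ (2 * n - 2 : ℕ))
    (α β : ℝ) (hαβ : ∀ m : ℤ, α - β ≠ (m : ℝ)) :
    G n p α β + G n p β α = 0 := by
  obtain rfl | hn := n.eq_zero_or_pos
  · simp [G]
  have hdeg : p.degree < ↑(#((range n).disjSum (range n)) - 1) :=
    hp.trans_lt <| by
      rw [card_disjSum, card_range]; exact_mod_cast (by omega : 2 * n - 2 < n + n - 1)
  have h := Lagrange.sum_div_prod_erase_sub_eq_zero (injective_sumElim_add_natCast hαβ).injOn hdeg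
  rw [sum_disjSum] at h
  simp only [disjSum_erase_inl, disjSum_erase_inr, prod_disjSum, Sum.elim_inl, Sum.elim_inr] at h
  simp only [mul_comm (∏ x ∈ range n, _) (∏ x ∈ (range n).erase _, _)] at h
  rw [← neg_one_pow_mul_G, ← neg_one_pow_mul_G, ← mul_add] at h
  exact (mul_eq_zero.1 h).resolve_left (by simp)

/-- If `deg p ≤ 2n−2` and `α − β ∉ ℤ`, then `G_{n−1}^{α,β} + G_{n−1}^{β,α} = 0`. -/
theorem G_antisymmetric (n : ℕ) (hn : 1 ≤ n) (p : Polynomial ℝ)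
    (hp : p.degree ≤ (2 * n - 2 : ℕ))
    (α β : ℝ) (hαβ : ∀ m : ℤ, α - β ≠ (m : ℝ)) :
    G n p α β + G n p β α = 0 :=
  G_antisymmetric_general n p hp α β hαβ
end

section
/- The value of the monic Jacobi–Piñeiro type II multiple orthogonal polynomial at x = 1 is B_{(n,m)}(1) = (γ+1)_{n+m} / ((α+γ+m+n+1)_n (β+γ+m+n+1)_m), and in particular B_{(n,m)}(1) > 0 for all n, m ∈ ℕ₀ when α, β, γ > −1. -/
/-- The Pochhammer symbol `(z)_k = z(z+1)⋯(z+k−1)`. -/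
noncomputable def poch (z : ℝ) (k : ℕ) : ℝ := ∏ i ∈ Finset.range k, (z + (i : ℝ))

/-- Coefficients of the Jacobi–Piñeiro type II polynomial. -/
noncomputable def JPcoef (α β γ : ℝ) (n m k j : ℕ) : ℝ :=
  poch (γ + j + k + 1) (m - j) * poch (γ + k + m + 1) (n - k) *
    poch (α - k + n + 1) k * poch (β - j - k + m + n + 1) j /
  ((Nat.factorial j : ℝ) * (Nat.factorial k : ℝ) *
    (Nat.factorial (m - j) : ℝ) * (Nat.factorial (n - k) : ℝ))

/-- The normalization constant `N_{n,m}`. -/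
noncomputable def JPnorm (α β γ : ℝ) (n m : ℕ) : ℝ :=
  (Nat.factorial n : ℝ) * (Nat.factorial m : ℝ) /
    (poch (α + γ + n + m + 1) n * poch (β + γ + n + m + 1) m)

/-- The monic Jacobi–Piñeiro type II multiple orthogonal polynomial. -/
noncomputable def JP (α β γ : ℝ) (n m : ℕ) (x : ℝ) : ℝ :=
  JPnorm α β γ n m *
    ∑ k ∈ Finset.range (n + 1), ∑ j ∈ Finset.range (m + 1),
      JPcoef α β γ n m k j * (x - 1) ^ (j + k) * x ^ (n + m - j - k)

@[simp]
lemma poch_zero (z : ℝ) : poch z 0 = 1 := Finset.prod_range_zero _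

lemma poch_add (z : ℝ) (a b : ℕ) : poch z (a + b) = poch z a * poch (z + a) b := by
  unfold poch
  rw [Finset.prod_range_add]
  congr 1
  refine Finset.prod_congr rfl fun i _ => ?_
  push_cast
  ring

lemma poch_pos_of_forall {z : ℝ} {k : ℕ} (hz : ∀ i < k, 0 < z + i) : 0 < poch z k :=
  Finset.prod_pos fun i hi => hz i (Finset.mem_range.mp hi)

lemma poch_pos {z : ℝ} (hz : 0 < z) (k : ℕ) : 0 < poch z k :=
  poch_pos_of_forall fun i _ => by positivity

/-- A nonempty product `(a + l + 1)_k` with `k ≤ l` starts at `a + l + 1 ≥ a + 2`. -/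
lemma poch_pos_of_le {a : ℝ} (ha : -2 < a) {k l : ℕ} (hkl : k ≤ l) : 0 < poch (a + l + 1) k :=
  poch_pos_of_forall fun i hi => by
    have hl : (1 : ℝ) ≤ l := by exact_mod_cast (show 1 ≤ l by omega)
    have hi : (0 : ℝ) ≤ i := i.cast_nonneg
    linarith

/-- At `x = 1` every term with `j + k > 0` carries a factor `(x - 1) ^ (j + k) = 0`. -/
lemma JP_one_eq_JPnorm_mul_JPcoef (α β γ : ℝ) (n m : ℕ) :
    JP α β γ n m 1 = JPnorm α β γ n m * JPcoef α β γ n m 0 0 := by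
  rw [JP, Finset.sum_eq_single_of_mem 0 (by simp), Finset.sum_eq_single_of_mem 0 (by simp)]
  · simp
  · intro j _ hj
    simp [hj]
  · intro k _ hk
    refine Finset.sum_eq_zero fun j _ => ?_
    simp [hk]

lemma JPcoef_zero_zero (α β γ : ℝ) (n m : ℕ) :
    JPcoef α β γ n m 0 0 =
      poch (γ + 1) (n + m) / ((Nat.factorial m : ℝ) * (Nat.factorial n : ℝ)) := by
  rw [add_comm n m, poch_add]
  simp [JPcoef, add_right_comm γ 1]

lemma JP_one (α β γ : ℝ) (n m : ℕ) :
    JP α β γ n m 1 =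
      poch (γ + 1) (n + m) / (poch (α + γ + n + m + 1) n * poch (β + γ + n + m + 1) m) := by
  rw [JP_one_eq_JPnorm_mul_JPcoef, JPnorm, JPcoef_zero_zero]
  field_simp

/-- `B_{(n,m)}(1) = (γ+1)_{n+m} / ((α+γ+m+n+1)_n (β+γ+m+n+1)_m)`, which is
strictly positive when `α, β, γ > −1`. -/
theorem jacobi_pineiro_value_at_one (n m : ℕ) (α β γ : ℝ)
    (hα : -1 < α) (hβ : -1 < β) (hγ : -1 < γ) :
    JP α β γ n m 1
      = poch (γ + 1) (n + m) /
          (poch (α + γ + m + n + 1) n * poch (β + γ + m + n + 1) m) ∧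
    0 < JP α β γ n m 1 := by
  have hval : JP α β γ n m 1 = poch (γ + 1) (n + m) /
      (poch (α + γ + m + n + 1) n * poch (β + γ + m + n + 1) m) := by
    rw [JP_one, add_right_comm α γ, add_right_comm β γ]
    ring_nf
  have hnum : 0 < poch (γ + 1) (n + m) := poch_pos (by linarith) _
  have hden_n : 0 < poch (α + γ + m + n + 1) n := by
    simpa [add_assoc] using poch_pos_of_le (a := α + γ) (by linarith) (Nat.le_add_left n m)
  have hden_m : 0 < poch (β + γ + m + n + 1) m := by
    simpa [add_assoc] using poch_pos_of_le (a := β + γ) (by linarith) (Nat.le_add_right m n)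
  exact ⟨hval, hval ▸ div_pos hnum (mul_pos hden_n hden_m)⟩
end

section
/- Let J be a banded nonnegative Jacobi matrix with J_{n,n+1} = 1, J B(λ) = λ B(λ), Jᵀ Q(λ) = λ Q(λ) for positive sequences B^{(n)}(λ), Q^{(n)}(λ). Then the row vector κ with entries κ_n = B^{(n)}(λ) Q^{(n)}(λ) is a nonnegative left eigenvector with eigenvalue 1 of both stochastic matrices P_{II} and P_I, i.e., ∑_n κ_n P_{II,n,m} = κ_m and ∑_n κ_n P_{I,n,m} = κ_m for every m. -/
/-- The row vector `κ_n = B^{(n)}(λ) Q^{(n)}(λ)` is a nonnegative left eigenvector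
with eigenvalue `1` of both dual multiple stochastic matrices
`P_{II,n,m} = (1/λ)(B^{(m)}(λ)/B^{(n)}(λ))J_{n,m}` and
`P_{I,n,m} = (1/λ)(Q^{(m)}(λ)/Q^{(n)}(λ))J_{m,n}`. -/
theorem steady_state_left_eigenvector
    (J : ℕ → ℕ → ℝ) (N : ℕ) (B Q : ℕ → ℝ) (lam : ℝ)
    (hJnonneg : ∀ n m, 0 ≤ J n m)
    (hJsup : ∀ n, J n (n + 1) = 1)
    (hJband : ∀ n m, (n + 1 < m ∨ m + N < n) → J n m = 0)
    (hB : ∀ n, 0 < B n) (hQ : ∀ n, 0 < Q n)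
    (hlam : 0 < lam)
    (heigB : ∀ n, ∑' m, J n m * B m = lam * B n)
    (heigQ : ∀ n, ∑' m, J m n * Q m = lam * Q n) :
    (∀ n, 0 ≤ B n * Q n) ∧
    (∀ m, ∑' n, (B n * Q n) * ((1 / lam) * (B m / B n) * J n m) = B m * Q m) ∧
    (∀ m, ∑' n, (B n * Q n) * ((1 / lam) * (Q m / Q n) * J m n) = B m * Q m) := by
  refine ⟨fun n => le_of_lt (mul_pos (hB n) (hQ n)), ?_, ?_⟩
  · intro m
    have h : ∀ n, (B n * Q n) * ((1 / lam) * (B m / B n) * J n m)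
        = (1 / lam * B m) * (J n m * Q n) := by
      intro n
      have hBn := (hB n).ne'
      field_simp
    rw [tsum_congr h, tsum_mul_left, heigQ m]
    field_simp
  · intro m
    have h : ∀ n, (B n * Q n) * ((1 / lam) * (Q m / Q n) * J m n)
        = (1 / lam * Q m) * (J m n * B n) := by
      intro n
      have hQn := (hQ n).ne'
      field_simp
    rw [tsum_congr h, tsum_mul_left, heigB m]
    field_simp
end
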